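/- Let M be a Markov chain with absorbing targets T and weight function w : T → [0,∞) such that every state can reach T along edges. Then the reachability Bellman update has a unique fixpoint in ℝ^S, and this fixpoint equals the weighted reachability value vector of M. -/

import Mathlib

/-- A finite Markov chain: transition function `δ` (nonnegative, rows sum to 1)
together with a set `T` of absorbing target states. There is an edge `s → s'`
iff `δ s s' > 0`. -/
structure MC (S : Type) [Fintype S] [DecidableEq S] where
  δ : S → S → ℝ
  T : Finset S
  nonneg : ∀ s s' : S, 0 ≤ δ s s'
  rowsum : ∀ s : S, ∑ s' : S, δ s s' = 1
  absorbing : ∀ t ∈ T, δ t t = 1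

variable {S : Type} [Fintype S] [DecidableEq S]

/-- Edge relation of a Markov chain: `s → s'` iff `δ s s' > 0`. -/
def MC.edge (M : MC S) (a b : S) : Prop := 0 < M.δ a b

/-- `pathLen r n a b`: there is a path of length `n` from `a` to `b` along `r`. -/
def pathLen (r : S → S → Prop) : ℕ → S → S → Prop
  | 0 => fun a b => a = b
  | n + 1 => fun a c => ∃ b, r a b ∧ pathLen r n b c

/-- `reaches r A s`: `s` can reach the set `A` along the relation `r`. -/
def reaches (r : S → S → Prop) (A : Set S) (s : S) : Prop :=
  ∃ n, ∃ a ∈ A, pathLen r n s a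

/-- Length of a shortest path from `s` to the set `A` along `r`. -/
noncomputable def distTo (r : S → S → Prop) (A : Set S) (s : S) : ℕ :=
  sInf {n | ∃ a ∈ A, pathLen r n s a}

/-- Level `0`: the targets together with all states that cannot reach the targets. -/
def MC.level0 (M : MC S) : Set S :=
  {s | s ∈ M.T ∨ ¬ reaches M.edge (M.T : Set S) s}

/-- The levels of a Markov chain: `ℓ_0` is `level0`, and for `i ≥ 1`, `ℓ_i` is the
set of states whose shortest edge-path distance to `ℓ_0` is exactly `i`. -/
noncomputable def MC.levelSet (M : MC S) : ℕ → Set S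
  | 0 => M.level0
  | i + 1 => {s | distTo M.edge M.level0 s = i + 1}

/-- `M` has (exactly) `k` levels: `ℓ_k` is the last nonempty level. -/
def MC.hasLevels (M : MC S) (k : ℕ) : Prop :=
  (M.levelSet k).Nonempty ∧ ∀ i, k < i → M.levelSet i = ∅

/-- One-step transition matrix of the Markov chain. -/
noncomputable def MC.P (M : MC S) : Matrix S S ℝ := Matrix.of M.δ

/-- Weighted reachability value `val(s) = E_s[w(X_{t*}) · 1{t* < ∞}]`, where `t*` is
the first hitting time of `T`. Since `T` is absorbing, this equals the supremum
(monotone limit) over `n` of `∑_{t ∈ T} (δⁿ)(s,t)·w(t)`. -/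
noncomputable def MC.reachVal (M : MC S) (w : S → ℝ) (s : S) : ℝ :=
  ⨆ n : ℕ, ∑ t ∈ M.T, (M.P ^ n) s t * w t

/-- Stochastic shortest path value `val(s) = E_s[∑_{t=0}^{t*} w(X_t)]`, where `t*` is
the first hitting time of `T`: the expected weight collected strictly before `T`
(states outside `T`, counted via the `n`-step distributions) plus the expected weight
of the first target state hit. -/
noncomputable def MC.sspVal (M : MC S) (w : S → ℝ) (s : S) : ℝ :=
  (∑' n : ℕ, ∑ s' ∈ Finset.univ.filter (fun x => x ∉ M.T), (M.P ^ n) s s' * w s')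
    + M.reachVal w s

/-- Smallest positive transition probability of the Markov chain. -/
noncomputable def MC.pmin (M : MC S) : ℝ :=
  sInf {p : ℝ | 0 < p ∧ ∃ s s' : S, M.δ s s' = p}

/-- Reachability Bellman update. -/
noncomputable def MC.reachUpdate (M : MC S) (w : S → ℝ) (v : S → ℝ) : S → ℝ :=
  fun s => if s ∈ M.T then w s else ∑ s' : S, M.δ s s' * v s'

/-- SSP Bellman update. -/
noncomputable def MC.sspUpdate (M : MC S) (w : S → ℝ) (v : S → ℝ) : S → ℝ :=
  fun s => if s ∈ M.T then w s else w s + ∑ s' : S, M.δ s s' * v s'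

/-- The reduced Markov chain `M[s = ·]`: the state `s` is made absorbing (its row of
`δ` replaced by the point mass at `s`) and added to the target set. -/
def MC.reduce (M : MC S) (s : S) : MC S where
  δ := fun a b => if a = s then (if b = s then 1 else 0) else M.δ a b
  T := insert s M.T
  nonneg := by
    intro a b
    by_cases h : a = s
    · by_cases h' : b = s <;> simp [h, h']
    · simpa [h] using M.nonneg a b
  rowsum := by
    intro a
    by_cases h : a = s
    · simp [h]
    · simpa [h] using M.rowsum a
  absorbing := by
    intro t ht
    rcases Finset.mem_insert.mp ht with h | h
    · simp [h]
    · by_cases h' : t = s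
      · simp [h']
      · simpa [h'] using M.absorbing t h

/-- Probability, in `M`, of ever visiting the state `s` when starting from `a`,
i.e. `P_a(∃ t ≥ 0, X_t = s)` (computed as a reachability value after making `s`
absorbing, which does not change the dynamics before the first visit to `s`). -/
noncomputable def MC.hitProb (M : MC S) (a s : S) : ℝ :=
  (M.reduce s).reachVal (fun b => if b = s then 1 else 0) a

/-- Probability of having reached `T` within `i` steps, `P_s(∃ t ≤ i, X_t ∈ T)`;
since `T` is absorbing this equals `∑_{t ∈ T} (δ^i)(s,t)`. -/
noncomputable def MC.hitBy (M : MC S) (s : S) (i : ℕ) : ℝ :=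
  ∑ t ∈ M.T, (M.P ^ i) s t

/-!
The value vector is the monotone limit of `Pⁿ w_T`, where `w_T` is `w` on `T` and `0` elsewhere;
passing to the limit in `Pⁿ⁺¹ w_T = P (Pⁿ w_T)` shows that it is a fixpoint. Two fixpoints differ
by a vector `d` vanishing on `T` with `d = P d` off `T`. Since rows of `P` are probability
vectors, `|d|` attains its maximum at every successor of a maximiser outside `T`; following a
path from a maximiser to `T` shows that this maximum is `0`.
-/

open Filter Topology Matrix

theorem Matrix.mulVec_mono_of_mem_rowStochastic {R n : Type*} [Ring R] [PartialOrder R]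
    [IsOrderedRing R] [Fintype n] [DecidableEq n] {A : Matrix n n R}
    (hA : A ∈ rowStochastic R n) {x y : n → R} (hxy : x ≤ y) : A *ᵥ x ≤ A *ᵥ y := fun i => by
  simpa [mulVec_sub] using
    nonneg_mulVec_of_mem_rowStochastic hA (x := y - x) (fun j => sub_nonneg.2 (hxy j)) i

theorem Matrix.mulVec_const_of_mem_rowStochastic {R n : Type*} [CommSemiring R] [PartialOrder R]
    [IsOrderedRing R] [Fintype n] [DecidableEq n] {A : Matrix n n R}
    (hA : A ∈ rowStochastic R n) (c : R) : A *ᵥ (fun _ => c) = fun _ => c := by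
  have hconst : (fun _ : n => c) = c • 1 := by ext; simp
  rw [hconst, mulVec_smul, one_vecMul_of_mem_rowStochastic hA]

theorem exists_and_of_pathLen {α : Type} {r : α → α → Prop} {A B : α → Prop}
    (hA : ∀ x y, A x → ¬ B x → r x y → A y) :
    ∀ {n : ℕ} {x y : α}, pathLen r n x y → A x → B y → ∃ z, A z ∧ B z
  | 0, x, _, rfl, hx, hy => ⟨x, hx, hy⟩
  | _ + 1, x, _, ⟨x', hxx', hpath⟩, hx, hy => by
    by_cases hBx : B x
    · exact ⟨x, hx, hBx⟩
    · exact exists_and_of_pathLen hA hpath (hA x x' hx hBx hxx') hy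

namespace MC

variable (M : MC S)

theorem P_mem_rowStochastic : M.P ∈ rowStochastic ℝ S :=
  mem_rowStochastic_iff_sum.2 ⟨M.nonneg, M.rowsum⟩

theorem mulVec_apply (v : S → ℝ) (s : S) : (M.P *ᵥ v) s = ∑ s', M.δ s s' * v s' := rfl

theorem δ_eq_zero_of_mem_T {t : S} (ht : t ∈ M.T) {b : S} (hb : b ≠ t) : M.δ t b = 0 := by
  have hrest : ∑ s ∈ Finset.univ.erase t, M.δ t s = 0 := by
    have := M.rowsum t
    rw [← Finset.add_sum_erase _ _ (Finset.mem_univ t), M.absorbing t ht] at this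
    linarith
  exact (Finset.sum_eq_zero_iff_of_nonneg fun s _ => M.nonneg t s).1 hrest b (by simp [hb])

theorem mulVec_apply_of_mem_T (v : S → ℝ) {t : S} (ht : t ∈ M.T) : (M.P *ᵥ v) t = v t := by
  rw [mulVec_apply, Finset.sum_eq_single t (fun b _ hb => by simp [M.δ_eq_zero_of_mem_T ht hb])
    (by simp), M.absorbing t ht, one_mul]

theorem reachUpdate_eq_self_iff {w v : S → ℝ} :
    M.reachUpdate w v = v ↔ (∀ t ∈ M.T, v t = w t) ∧ ∀ s ∉ M.T, (M.P *ᵥ v) s = v s := by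
  simp only [funext_iff, reachUpdate, mulVec_apply]
  constructor
  · intro h
    exact ⟨fun t ht => by simpa [ht] using (h t).symm, fun s hs => by simpa [hs] using h s⟩
  · rintro ⟨hT, hP⟩ s
    split_ifs with hs
    exacts [(hT s hs).symm, hP s hs]

def targetWeight (w : S → ℝ) : S → ℝ := fun t => if t ∈ M.T then w t else 0

noncomputable def reachApprox (w : S → ℝ) (n : ℕ) : S → ℝ := (M.P ^ n) *ᵥ M.targetWeight w

theorem reachVal_eq_iSup (w : S → ℝ) (s : S) :
    M.reachVal w s = ⨆ n, M.reachApprox w n s := by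
  simp [reachVal, reachApprox, targetWeight, mulVec, dotProduct]

theorem reachApprox_succ (w : S → ℝ) (n : ℕ) :
    M.reachApprox w (n + 1) = M.P *ᵥ M.reachApprox w n := by
  rw [reachApprox, reachApprox, pow_succ', mulVec_mulVec]

theorem reachApprox_of_mem_T (w : S → ℝ) {t : S} (ht : t ∈ M.T) (n : ℕ) :
    M.reachApprox w n t = w t := by
  induction n with
  | zero => simp [reachApprox, targetWeight, ht]
  | succ n ih => rw [reachApprox_succ, mulVec_apply_of_mem_T _ _ ht, ih]

theorem monotone_reachApprox {w : S → ℝ} (hw : ∀ t ∈ M.T, 0 ≤ w t) :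
    Monotone (M.reachApprox w) := by
  have hstep : M.targetWeight w ≤ M.P *ᵥ M.targetWeight w := fun s => by
    by_cases hs : s ∈ M.T
    · rw [mulVec_apply_of_mem_T _ _ hs]
    · simp only [targetWeight, hs, if_false]
      refine nonneg_mulVec_of_mem_rowStochastic M.P_mem_rowStochastic (fun t => ?_) s
      unfold targetWeight
      split_ifs with ht
      exacts [hw t ht, le_rfl]
  refine monotone_nat_of_le_succ fun n => ?_
  rw [reachApprox, reachApprox, pow_succ, ← mulVec_mulVec]
  exact mulVec_mono_of_mem_rowStochastic (pow_mem M.P_mem_rowStochastic n) hstep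

theorem exists_reachApprox_le (w : S → ℝ) : ∃ c, ∀ n s, M.reachApprox w n s ≤ c := by
  obtain ⟨c, hc⟩ := (Set.finite_range (M.targetWeight w)).bddAbove
  refine ⟨c, fun n s => ?_⟩
  have hP := pow_mem M.P_mem_rowStochastic n
  calc M.reachApprox w n s ≤ ((M.P ^ n) *ᵥ fun _ => c) s :=
        mulVec_mono_of_mem_rowStochastic hP (fun t => hc ⟨t, rfl⟩) s
    _ = c := by rw [mulVec_const_of_mem_rowStochastic hP]

theorem tendsto_reachApprox {w : S → ℝ} (hw : ∀ t ∈ M.T, 0 ≤ w t) :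
    Tendsto (M.reachApprox w) atTop (𝓝 (M.reachVal w)) := by
  obtain ⟨c, hc⟩ := M.exists_reachApprox_le w
  refine tendsto_pi_nhds.2 fun s => ?_
  rw [reachVal_eq_iSup]
  exact tendsto_atTop_ciSup (fun _ _ hmn => M.monotone_reachApprox hw hmn s)
    ⟨c, by rintro _ ⟨n, rfl⟩; exact hc n s⟩

theorem mulVec_reachVal {w : S → ℝ} (hw : ∀ t ∈ M.T, 0 ≤ w t) :
    M.P *ᵥ M.reachVal w = M.reachVal w := by
  have hcont : Continuous (M.P *ᵥ · : (S → ℝ) → S → ℝ) :=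
    (mulVecLin M.P).continuous_of_finiteDimensional
  have hsucc : Tendsto (fun n => M.reachApprox w (n + 1)) atTop (𝓝 (M.reachVal w)) :=
    (M.tendsto_reachApprox hw).comp (tendsto_add_atTop_nat 1)
  simp only [reachApprox_succ] at hsucc
  exact tendsto_nhds_unique ((hcont.tendsto _).comp (M.tendsto_reachApprox hw)) hsucc

theorem reachVal_of_mem_T (w : S → ℝ) {t : S} (ht : t ∈ M.T) : M.reachVal w t = w t := by
  simp [reachVal_eq_iSup, M.reachApprox_of_mem_T w ht]

theorem reachUpdate_reachVal {w : S → ℝ} (hw : ∀ t ∈ M.T, 0 ≤ w t) :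
    M.reachUpdate w (M.reachVal w) = M.reachVal w :=
  M.reachUpdate_eq_self_iff.2
    ⟨fun _ ht => M.reachVal_of_mem_T w ht, fun s _ => congrFun (M.mulVec_reachVal hw) s⟩

theorem eq_of_edge_of_le_mulVec {f : S → ℝ} {m : ℝ} (hf : ∀ s, f s ≤ m) {s b : S}
    (hs : m ≤ (M.P *ᵥ f) s) (hsb : M.edge s b) : f b = m := by
  have hterm (s' : S) : 0 ≤ M.δ s s' * (m - f s') :=
    mul_nonneg (M.nonneg s s') (sub_nonneg.2 (hf s'))
  have hgap : ∑ s', M.δ s s' * (m - f s') = 0 := by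
    have hsum : ∑ s', M.δ s s' * (m - f s') = m - (M.P *ᵥ f) s := by
      simp only [mul_sub, Finset.sum_sub_distrib, ← Finset.sum_mul, M.rowsum, one_mul,
        mulVec_apply]
    linarith [Finset.sum_nonneg fun s' (_ : s' ∈ Finset.univ) => hterm s']
  have hb : M.δ s b * (m - f b) = 0 :=
    (Finset.sum_eq_zero_iff_of_nonneg fun s' _ => hterm s').1 hgap b (Finset.mem_univ b)
  linarith [(mul_eq_zero.1 hb).resolve_left hsb.ne']

theorem eq_zero_of_mulVec_eq (hreach : ∀ a : S, reaches M.edge (M.T : Set S) a) {d : S → ℝ}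
    (hT : ∀ t ∈ M.T, d t = 0) (hd : ∀ s ∉ M.T, (M.P *ᵥ d) s = d s) : d = 0 := by
  funext s
  obtain ⟨s₀, -, hs₀⟩ := Finset.exists_max_image Finset.univ (fun s => |d s|) ⟨s, by simp⟩
  have hmax (s : S) : |d s| ≤ |d s₀| := hs₀ s (Finset.mem_univ s)
  have hedge (x y : S) (hx : |d x| = |d s₀|) (hxT : x ∉ M.T) (hxy : M.edge x y) :
      |d y| = |d s₀| := by
    refine M.eq_of_edge_of_le_mulVec hmax ?_ hxy
    calc |d s₀| = |∑ s', M.δ x s' * d s'| := by rw [← hx, ← hd x hxT, mulVec_apply]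
      _ ≤ ∑ s', |M.δ x s' * d s'| := Finset.abs_sum_le_sum_abs _ _
      _ = (M.P *ᵥ fun s => |d s|) x := by
        simp only [mulVec_apply, abs_mul, abs_of_nonneg (M.nonneg _ _)]
  obtain ⟨n, t, ht, hpath⟩ := hreach s₀
  obtain ⟨z, hz, hzT⟩ := exists_and_of_pathLen hedge hpath rfl ht
  have hzero : |d s₀| = 0 := by rw [← hz, hT z hzT, abs_zero]
  simpa [hzero] using hmax s

theorem eq_of_reachUpdate_eq_self (hreach : ∀ a : S, reaches M.edge (M.T : Set S) a)
    {w u v : S → ℝ} (hu : M.reachUpdate w u = u) (hv : M.reachUpdate w v = v) : u = v := by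
  rw [reachUpdate_eq_self_iff] at hu hv
  have hdiff : u - v = 0 := M.eq_zero_of_mulVec_eq hreach
    (fun t ht => by simp [hu.1 t ht, hv.1 t ht])
    (fun s hs => by simp [mulVec_sub, hu.2 s hs, hv.2 s hs])
  exact sub_eq_zero.1 hdiff

end MC

theorem stmt_17_general {S : Type} [Fintype S] [DecidableEq S]
    (M : MC S) (hreach : ∀ a : S, reaches M.edge (M.T : Set S) a)
    (w : S → ℝ) (hw : ∀ t ∈ M.T, 0 ≤ w t) :
    ∀ v : S → ℝ, M.reachUpdate w v = v ↔ v = M.reachVal w := fun _ =>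
  ⟨fun hv => M.eq_of_reachUpdate_eq_self hreach hv (M.reachUpdate_reachVal hw),
    fun h => h ▸ M.reachUpdate_reachVal hw⟩

/-- If every state can reach `T`, then the reachability Bellman
update has a unique fixpoint, and it equals the weighted reachability value vector. -/
theorem stmt_17 {S : Type} [Fintype S] [DecidableEq S] [Nonempty S]
    (M : MC S) (hreach : ∀ a : S, reaches M.edge (M.T : Set S) a)
    (w : S → ℝ) (hw : ∀ t ∈ M.T, 0 ≤ w t) :
    ∀ v : S → ℝ, M.reachUpdate w v = v ↔ v = M.reachVal w :=
  stmt_17_general M hreach w hw
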